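/- Suppose s ∈ ℝ is such that either β^{(s)} = b, or β^{(s)} < b and (k^{(s)})''(β^{(s)}) ≠ 0. Then the map u ↦ β^{(u)} is continuous at u = s; that is, limsup_{δ→0} β^{(s+δ)} ≤ β^{(s)} ≤ liminf_{δ→0} β^{(s+δ)}. -/

import Mathlib

/-!
The derivatives `k' u` depend Lipschitz-continuously on the initial value `u`, uniformly on
`[0, b]`: this is Grönwall's inequality for the first-order system satisfied by `(k, k')`, whose
vector field is globally Lipschitz because `F` is bounded and 1-Lipschitz. So it suffices that
the first time `k' s` reaches `r` is stable under uniform perturbations of `k' s`. From below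
this always holds, since `k' s` stays below `r` with a positive margin on every `[0, c]` with
`c < β s`. From above it holds trivially when `β s = b`; otherwise `k' s < r` on `[0, β s)` forces
`k'' s (β s) ≥ 0`, so a nonzero value is positive, `k' s` exceeds `r` just after `β s`, and so do
its perturbations.
-/

open Set

/-- k (with derivatives k', k'') is a C² solution on [0,b] of the Cauchy problem
k'' + (2/σ²)(m·F(k') + ½σ²ε·F(k')² − ϱ·k + h(x)) = 0, k(0) = s, k'(0) = 0. -/
def IsCauchySolution (b σ ϱ m : ℝ) (h F : ℝ → ℝ) (ε s : ℝ) (k k' k'' : ℝ → ℝ) : Prop :=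
  (∀ x ∈ Icc (0:ℝ) b, HasDerivWithinAt k (k' x) (Icc (0:ℝ) b) x) ∧
  (∀ x ∈ Icc (0:ℝ) b, HasDerivWithinAt k' (k'' x) (Icc (0:ℝ) b) x) ∧
  ContinuousOn k'' (Icc (0:ℝ) b) ∧
  (∀ x ∈ Icc (0:ℝ) b,
    k'' x + (2 / σ ^ 2) * (m * F (k' x) + (1 / 2) * σ ^ 2 * ε * (F (k' x)) ^ 2
      - ϱ * k x + h x) = 0) ∧
  k 0 = s ∧ k' 0 = 0

open Filter Topology

noncomputable def hittingTime (g : ℝ → ℝ) (r b : ℝ) : ℝ :=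
  sInf (insert b {x : ℝ | x ∈ Ioc (0:ℝ) b ∧ r ≤ g x})

section HittingTime

variable {g : ℝ → ℝ} {r b : ℝ}

lemma bddBelow_hittingSet :
    BddBelow (insert b {x : ℝ | x ∈ Ioc (0:ℝ) b ∧ r ≤ g x}) :=
  ⟨min 0 b, by rintro x (rfl | hx); exacts [min_le_right _ _, (min_le_left _ _).trans hx.1.1.le]⟩

lemma hittingTime_le : hittingTime g r b ≤ b :=
  csInf_le bddBelow_hittingSet (mem_insert _ _)

lemma hittingTime_le_of_mem {x : ℝ} (hx : x ∈ Ioc 0 b) (hgx : r ≤ g x) :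
    hittingTime g r b ≤ x :=
  csInf_le bddBelow_hittingSet (mem_insert_of_mem _ ⟨hx, hgx⟩)

lemma le_hittingTime {c : ℝ} (hcb : c ≤ b) (hc : ∀ x ∈ Ioc 0 b, r ≤ g x → c ≤ x) :
    c ≤ hittingTime g r b :=
  le_csInf (insert_nonempty _ _) (by rintro x (rfl | hx); exacts [hcb, hc x hx.1 hx.2])

lemma apply_lt_of_lt_hittingTime (hg0 : g 0 < r) {x : ℝ} (hx0 : 0 ≤ x)
    (hx : x < hittingTime g r b) : g x < r := by
  rcases hx0.eq_or_lt with rfl | hx0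
  · exact hg0
  · by_contra! hgx
    exact (hittingTime_le_of_mem ⟨hx0, hx.le.trans hittingTime_le⟩ hgx).not_gt hx

lemma le_apply_hittingTime (hg : ContinuousOn g (Icc 0 b)) (hτ : hittingTime g r b < b) :
    r ≤ g (hittingTime g r b) := by
  set S := {x : ℝ | x ∈ Ioc (0:ℝ) b ∧ r ≤ g x}
  have hS : S.Nonempty := by
    by_contra! hS
    have : hittingTime g r b = b := by
      change sInf (insert b S) = b
      rw [hS, insert_empty_eq, csInf_singleton]
    exact hτ.ne this
  have hbdd : BddBelow S := ⟨0, fun x hx => hx.1.1.le⟩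
  have hτS : hittingTime g r b = sInf S := by
    rw [hittingTime, csInf_insert hbdd hS] at hτ ⊢
    exact min_eq_right (min_lt_iff.1 hτ |>.resolve_left (lt_irrefl b)).le
  have hT : IsClosed (Icc 0 b ∩ g ⁻¹' Ici r) :=
    hg.preimage_isClosed_of_isClosed isClosed_Icc isClosed_Ici
  have hST : S ⊆ Icc 0 b ∩ g ⁻¹' Ici r := fun x hx => ⟨Ioc_subset_Icc_self hx.1, hx.2⟩
  rw [hτS]
  exact (closure_minimal hST hT (csInf_mem_closure hS hbdd)).2

lemma hittingTime_nonneg (hb : 0 ≤ b) : 0 ≤ hittingTime g r b :=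
  le_hittingTime hb fun _ hx _ => hx.1.le

lemma hittingTime_pos (hb : 0 < b) (hg : ContinuousOn g (Icc 0 b)) (hg0 : g 0 < r) :
    0 < hittingTime g r b := by
  rcases hittingTime_le.lt_or_eq with hτ | hτ
  · refine (hittingTime_nonneg hb.le).lt_of_ne fun h0 => ?_
    have := le_apply_hittingTime hg hτ
    rw [← h0] at this
    exact this.not_gt hg0
  · exact hτ.symm ▸ hb

end HittingTime

lemma eventually_lt_apply_of_hasDerivAt {g : ℝ → ℝ} {d p τ : ℝ} (hd : HasDerivAt g d τ)
    (hd0 : d ≠ 0) (hpτ : p < τ) (hleft : ∀ y ∈ Ioo p τ, g y < g τ) :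
    ∀ᶠ y in 𝓝[>] τ, g τ < g y := by
  obtain ⟨hslope_left, hslope_right⟩ := hasDerivAt_iff_tendsto_slope_left_right.1 hd
  have hd_nonneg : 0 ≤ d := by
    refine ge_of_tendsto hslope_left ?_
    filter_upwards [Ioo_mem_nhdsLT hpτ] with y hy
    rw [slope_comm]
    exact ((slope_pos_iff_of_le hy.2.le).2 (hleft y hy)).le
  filter_upwards [hslope_right.eventually (lt_mem_nhds (hd_nonneg.lt_of_ne' hd0)),
    self_mem_nhdsWithin] with y hy hτy
  exact (slope_pos_iff_of_le (le_of_lt hτy)).1 hy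

section Continuity

variable {g : ℝ → ℝ} {r b : ℝ}

lemma exists_lt_apply_of_hittingTime_lt (hb : 0 < b) (hg : ContinuousOn g (Icc 0 b))
    (hg0 : g 0 < r) (hτb : hittingTime g r b < b) {d : ℝ}
    (hd : HasDerivWithinAt g d (Icc 0 b) (hittingTime g r b)) (hd0 : d ≠ 0) {a : ℝ}
    (ha : hittingTime g r b < a) : ∃ y ∈ Ioc 0 b, y < a ∧ r < g y := by
  set τ := hittingTime g r b
  have hτ0 : 0 < τ := hittingTime_pos hb hg hg0
  have hrτ : r ≤ g τ := le_apply_hittingTime hg hτb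
  have hleft : ∀ y ∈ Ioo 0 τ, g y < g τ := fun y hy =>
    (apply_lt_of_lt_hittingTime hg0 hy.1.le hy.2).trans_le hrτ
  have hright := eventually_lt_apply_of_hasDerivAt (hd.hasDerivAt (Icc_mem_nhds hτ0 hτb)) hd0
    hτ0 hleft
  have hnear : ∀ᶠ y in 𝓝[>] τ, y ∈ Ioo τ (min a b) ∧ g τ < g y := by
    filter_upwards [Ioo_mem_nhdsGT (lt_min ha hτb), hright] with y hy hgy using ⟨hy, hgy⟩
  obtain ⟨y, ⟨hτy, hyab⟩, hgy⟩ := hnear.exists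
  exact ⟨y, ⟨hτ0.trans hτy, (lt_min_iff.1 hyab).2.le⟩, (lt_min_iff.1 hyab).1,
    hrτ.trans_lt hgy⟩

variable {ι : Type*} {l : Filter ι} {G : ι → ℝ → ℝ}

lemma eventually_hittingTime_lt (hb : 0 < b) (hg : ContinuousOn g (Icc 0 b)) (hg0 : g 0 < r)
    (hG : ∀ x ∈ Icc 0 b, Tendsto (G · x) l (𝓝 (g x)))
    (hτ : hittingTime g r b = b ∨ hittingTime g r b < b ∧
      ∃ d ≠ 0, HasDerivWithinAt g d (Icc 0 b) (hittingTime g r b))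
    {a : ℝ} (ha : hittingTime g r b < a) : ∀ᶠ i in l, hittingTime (G i) r b < a := by
  rcases hτ with hτb | ⟨hτb, d, hd0, hd⟩
  · exact Eventually.of_forall fun i => hittingTime_le.trans_lt (hτb ▸ ha)
  obtain ⟨y, hy, hya, hgy⟩ := exists_lt_apply_of_hittingTime_lt hb hg hg0 hτb hd hd0 ha
  filter_upwards [(hG y (Ioc_subset_Icc_self hy)).eventually (lt_mem_nhds hgy)] with i hi
  exact (hittingTime_le_of_mem hy hi.le).trans_lt hya

lemma eventually_lt_hittingTime (hb : 0 < b) (hg : ContinuousOn g (Icc 0 b)) (hg0 : g 0 < r)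
    (hG : TendstoUniformlyOn G g l (Icc 0 b)) {a : ℝ} (ha : a < hittingTime g r b) :
    ∀ᶠ i in l, a < hittingTime (G i) r b := by
  obtain ⟨c, hac, hcτ⟩ := exists_between (max_lt ha (hittingTime_pos hb hg hg0))
  have hc0 : 0 ≤ c := (le_max_right _ _).trans hac.le
  have hcb : c ≤ b := hcτ.le.trans hittingTime_le
  obtain ⟨x₀, hx₀, hmax⟩ := isCompact_Icc.exists_isMaxOn (nonempty_Icc.2 hc0)
    (hg.mono (Icc_subset_Icc_right hcb))
  have hgx₀ : g x₀ < r := apply_lt_of_lt_hittingTime hg0 hx₀.1 (hx₀.2.trans_lt hcτ)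
  filter_upwards [Metric.tendstoUniformlyOn_iff.1 hG _ (sub_pos.2 hgx₀)] with i hi
  refine (le_max_left _ _).trans_lt (hac.trans_le (le_hittingTime hcb fun x hx hGx => ?_))
  by_contra! hxc
  have hclose := hi x (Ioc_subset_Icc_self hx)
  rw [Real.dist_eq, abs_lt] at hclose
  have : g x ≤ g x₀ := hmax ⟨hx.1.le, hxc.le⟩
  linarith [hclose.1]

theorem tendsto_hittingTime (hb : 0 < b) (hg : ContinuousOn g (Icc 0 b)) (hg0 : g 0 < r)
    (hG : TendstoUniformlyOn G g l (Icc 0 b))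
    (hτ : hittingTime g r b = b ∨ hittingTime g r b < b ∧
      ∃ d ≠ 0, HasDerivWithinAt g d (Icc 0 b) (hittingTime g r b)) :
    Tendsto (fun i => hittingTime (G i) r b) l (𝓝 (hittingTime g r b)) :=
  tendsto_order.2 ⟨fun _ ha => eventually_lt_hittingTime hb hg hg0 hG ha,
    fun _ ha => eventually_hittingTime_lt hb hg hg0 (fun _ hx => hG.tendsto_at hx) hτ ha⟩

end Continuity

lemma abs_sq_sub_sq_le {a b M : ℝ} (ha : |a| ≤ M) (hb : |b| ≤ M) :
    |a ^ 2 - b ^ 2| ≤ 2 * M * |a - b| := by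
  rw [sq_sub_sq, abs_mul]
  gcongr
  linarith [abs_add_le a b]

noncomputable def cauchyVectorField (σ ϱ m ε : ℝ) (h F : ℝ → ℝ) (x : ℝ) (p : ℝ × ℝ) : ℝ × ℝ :=
  (p.2, -((2 / σ ^ 2) * (m * F p.2 + (1 / 2) * σ ^ 2 * ε * F p.2 ^ 2 - ϱ * p.1 + h x)))

section CauchyProblem

variable {b σ ϱ m ε M : ℝ} {h F : ℝ → ℝ}

lemma lipschitzWith_cauchyVectorField (hF : LipschitzWith 1 F) (hFM : ∀ z, |F z| ≤ M) :
    ∃ K, ∀ x, LipschitzWith K (cauchyVectorField σ ϱ m ε h F x) := by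
  set L := 2 / σ ^ 2 * (|m| + σ ^ 2 * |ε| * M + |ϱ|)
  have hM : 0 ≤ M := (abs_nonneg _).trans (hFM 0)
  have hL : 0 ≤ L := by positivity
  refine ⟨_, fun x => LipschitzWith.prod_snd.prodMk
    (LipschitzWith.of_dist_le_mul (K := L.toNNReal) fun p q => ?_)⟩
  have hF₁ : |F p.2 - F q.2| ≤ dist p q := by
    rw [← Real.dist_eq]
    exact (by simpa using hF.dist_le_mul p.2 q.2 : dist (F p.2) (F q.2) ≤ dist p.2 q.2).trans
      (le_max_right _ _)
  have hF₂ : |F p.2 ^ 2 - F q.2 ^ 2| ≤ 2 * M * dist p q :=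
    (abs_sq_sub_sq_le (hFM _) (hFM _)).trans (by gcongr)
  have hp₁ : |p.1 - q.1| ≤ dist p q := by rw [← Real.dist_eq]; exact le_max_left _ _
  rw [Real.coe_toNNReal _ hL, Real.dist_eq]
  calc _ = |-(2 / σ ^ 2 * (m * (F p.2 - F q.2) + (1 / 2) * σ ^ 2 * ε * (F p.2 ^ 2 - F q.2 ^ 2)
          - ϱ * (p.1 - q.1)))| := by
        congr 1
        ring
    _ = 2 / σ ^ 2 * |m * (F p.2 - F q.2) + (1 / 2) * σ ^ 2 * ε * (F p.2 ^ 2 - F q.2 ^ 2)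
          - ϱ * (p.1 - q.1)| := by
        rw [abs_neg, abs_mul, abs_of_nonneg (by positivity : (0:ℝ) ≤ 2 / σ ^ 2)]
    _ ≤ 2 / σ ^ 2 * (|m| * dist p q + (1 / 2) * σ ^ 2 * |ε| * (2 * M * dist p q)
          + |ϱ| * dist p q) := by
        gcongr
        refine (abs_sub _ _).trans (add_le_add ((abs_add_le _ _).trans (add_le_add ?_ ?_)) ?_)
        · rw [abs_mul]; gcongr
        · rw [abs_mul, abs_mul, abs_of_nonneg (by positivity : (0:ℝ) ≤ 1 / 2 * σ ^ 2)]
          gcongr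
        · rw [abs_mul]; gcongr
    _ = L * dist p q := by ring

lemma IsCauchySolution.continuousOn_prod {s : ℝ} {k k' k'' : ℝ → ℝ}
    (hk : IsCauchySolution b σ ϱ m h F ε s k k' k'') :
    ContinuousOn (fun x => (k x, k' x)) (Icc 0 b) :=
  fun x hx => ((hk.1 x hx).prodMk (hk.2.1 x hx)).continuousWithinAt

lemma IsCauchySolution.hasDerivWithinAt_prod {s : ℝ} {k k' k'' : ℝ → ℝ}
    (hk : IsCauchySolution b σ ϱ m h F ε s k k' k'') {x : ℝ} (hx : x ∈ Ico 0 b) :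
    HasDerivWithinAt (fun x => (k x, k' x)) (cauchyVectorField σ ϱ m ε h F x (k x, k' x))
      (Ici x) x := by
  obtain ⟨hk, hk', -, heq, -, -⟩ := hk
  have hx' : x ∈ Icc 0 b := Ico_subset_Icc_self hx
  have hk''x : k'' x = -((2 / σ ^ 2) * (m * F (k' x) + (1 / 2) * σ ^ 2 * ε * F (k' x) ^ 2
      - ϱ * k x + h x)) := by linarith [heq x hx']
  have hderiv := ((hk x hx').prodMk (hk' x hx')).mono (Icc_subset_Icc_left hx.1)
  rw [cauchyVectorField, ← hk''x]
  exact hderiv.mono_of_mem_nhdsWithin (Icc_mem_nhdsGE_of_mem ⟨le_rfl, hx.2⟩)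

theorem tendstoUniformlyOn_of_isCauchySolution (hF : LipschitzWith 1 F) (hFM : ∀ z, |F z| ≤ M)
    {k k' k'' : ℝ → ℝ → ℝ} (hsol : ∀ u, IsCauchySolution b σ ϱ m h F ε u (k u) (k' u) (k'' u))
    (s : ℝ) : TendstoUniformlyOn k' (k' s) (𝓝 s) (Icc 0 b) := by
  obtain ⟨K, hK⟩ := lipschitzWith_cauchyVectorField (σ := σ) (ϱ := ϱ) (m := m) (ε := ε) (h := h)
    hF hFM
  have hdist : ∀ u, ∀ x ∈ Icc 0 b, dist (k' s x) (k' u x) ≤ dist s u * Real.exp (K * b) := by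
    intro u x hx
    have hinit : dist (k s 0, k' s 0) (k u 0, k' u 0) ≤ dist s u := by
      obtain ⟨-, -, -, -, hks0, hk's0⟩ := hsol s
      obtain ⟨-, -, -, -, hku0, hk'u0⟩ := hsol u
      simp [hks0, hk's0, hku0, hk'u0]
    calc dist (k' s x) (k' u x) ≤ dist (k s x, k' s x) (k u x, k' u x) := le_max_right _ _
      _ ≤ dist s u * Real.exp (K * (x - 0)) :=
        dist_le_of_trajectories_ODE hK (hsol s).continuousOn_prod
          (fun _ hy => (hsol s).hasDerivWithinAt_prod hy) (hsol u).continuousOn_prod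
          (fun _ hy => (hsol u).hasDerivWithinAt_prod hy) hinit x hx
      _ ≤ dist s u * Real.exp (K * b) := by gcongr; linarith [hx.2]
  have hsmall : Tendsto (fun u => dist s u * Real.exp (K * b)) (𝓝 s) (𝓝 0) := by
    simpa using ((tendsto_const_nhds (x := s)).dist (tendsto_id (x := 𝓝 s))).mul_const
      (Real.exp (K * b))
  rw [Metric.tendstoUniformlyOn_iff]
  intro δ hδ
  filter_upwards [hsmall.eventually (gt_mem_nhds hδ)] with u hu x hx
  exact (hdist u x hx).trans_lt hu

end CauchyProblem

theorem stmt11_general (b σ ϱ r m ε : ℝ) (hb : 0 < b) (hr : 0 < r)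
    (h F : ℝ → ℝ)
    (hF1 : ContDiff ℝ 1 F)
    (hFbd : ∀ z : ℝ, |F z| ≤ 2 * r) (hF'bd : ∀ z : ℝ, |deriv F z| ≤ 1)
    (k k' k'' : ℝ → ℝ → ℝ)
    (hsol : ∀ u : ℝ, IsCauchySolution b σ ϱ m h F ε u (k u) (k' u) (k'' u))
    (β : ℝ → ℝ)
    (hβ : ∀ u : ℝ, β u = sInf (insert b {x : ℝ | x ∈ Ioc (0:ℝ) b ∧ r ≤ k' u x}))
    (s : ℝ)
    (hs : β s = b ∨ (β s < b ∧ k'' s (β s) ≠ 0)) :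
    ContinuousAt β s := by
  obtain rfl : β = fun u => hittingTime (k' u) r b := funext hβ
  obtain ⟨-, hk's, -, -, -, hk's0⟩ := hsol s
  have hFlip : LipschitzWith 1 F := lipschitzWith_of_nnnorm_deriv_le
    (hF1.differentiable one_ne_zero) fun z => by simpa [← NNReal.coe_le_coe] using hF'bd z
  have hτ : hittingTime (k' s) r b ∈ Icc 0 b := ⟨hittingTime_nonneg hb.le, hittingTime_le⟩
  exact tendsto_hittingTime hb (fun x hx => (hk's x hx).continuousWithinAt)
    (by rw [hk's0]; exact hr)
    (tendstoUniformlyOn_of_isCauchySolution hFlip hFbd hsol s)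
    (hs.imp_right fun hlt => ⟨hlt.1, _, hlt.2, hk's _ hτ⟩)

/-- Suppose s ∈ ℝ is such that either β^{(s)} = b, or β^{(s)} < b and
(k^{(s)})''(β^{(s)}) ≠ 0. Then the map u ↦ β^{(u)} is continuous at u = s, where
β^{(u)} = min(inf{x ∈ (0,b] : (k^{(u)})'(x) ≥ r}, b) (convention inf ∅ = +∞). -/
theorem stmt11 (b σ ϱ r m ε : ℝ) (hb : 0 < b) (hσ : 0 < σ) (hϱ : 0 < ϱ) (hr : 0 < r)
    (hε : 0 ≤ ε) (h F : ℝ → ℝ)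
    (hLip : ∃ K : NNReal, LipschitzOnWith K h (Icc (0:ℝ) b))
    (hF1 : ContDiff ℝ 1 F) (hFid : ∀ z : ℝ, |z| ≤ r → F z = z)
    (hFbd : ∀ z : ℝ, |F z| ≤ 2 * r) (hF'bd : ∀ z : ℝ, |deriv F z| ≤ 1)
    (k k' k'' : ℝ → ℝ → ℝ)
    (hsol : ∀ u : ℝ, IsCauchySolution b σ ϱ m h F ε u (k u) (k' u) (k'' u))
    (β : ℝ → ℝ)
    (hβ : ∀ u : ℝ, β u = sInf (insert b {x : ℝ | x ∈ Ioc (0:ℝ) b ∧ r ≤ k' u x}))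
    (s : ℝ)
    (hs : β s = b ∨ (β s < b ∧ k'' s (β s) ≠ 0)) :
    ContinuousAt β s :=
  stmt11_general b σ ϱ r m ε hb hr h F hF1 hFbd hF'bd k k' k'' hsol β hβ s hs
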